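/- arXiv:1806.06103 — 5 statements merged into one kernel-verified Lean document; each statement's English description precedes it below -/
import Mathlib

section
/- Consider an ODE system where, for each element e, dE^e/dt = Σ_{g ∈ G^e} Δ^{-g}, and for every mortar g the sum of contributions from its two sides satisfies Δ^{-g} + Δ^{+g} = -(α/2)(⟦p⟧ᵀ A ⟦p⟧ + ⟦v_n⟧ᵀ A ⟦v_n⟧) with A symmetric positive semidefinite and α ≥ 0, while boundary mortars satisfy Δ^{-g} = -α (v_n⁻)ᵀ A v_n⁻. Then the total energy E(t) = Σ_e E^e(t) is nonincreasing: E(t) ≤ E(0) for all t ≥ 0. -/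
open Matrix

/-!
Differentiating the total energy and regrouping the element sums by mortars gives
`dE/dt = Σ_g (Δ^{-g} + Δ^{+g})` over interior mortars plus `Σ_g Δ^{-g}` over boundary
mortars, since every mortar contributes once through its minus element and, if interior, once
through its plus element. Each of these mortar terms is `-α` times a nonnegative combination
of positive semidefinite quadratic forms, so `dE/dt ≤ 0` and `E` is antitone.
-/

lemma sum_sum_mortar_contributions {E G M : Type*} [Fintype E] [Fintype G] [DecidableEq E]
    [AddCommMonoid M] (interior : G → Prop) [DecidablePred interior]
    (elmMinus elmPlus : G → E) (Δm Δp : G → M) :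
    ∑ e, ∑ g, ((if elmMinus g = e then Δm g else 0) +
        (if interior g ∧ elmPlus g = e then Δp g else 0)) =
      ∑ g, (Δm g + if interior g then Δp g else 0) := by
  rw [Finset.sum_comm]
  refine Finset.sum_congr rfl fun g _ => ?_
  rw [Finset.sum_add_distrib]
  by_cases hg : interior g <;> simp [hg]

lemma Matrix.PosSemidef.dotProduct_mulVec_nonneg_real {n : Type*} [Fintype n]
    {A : Matrix n n ℝ} (hA : A.PosSemidef) (x : n → ℝ) : 0 ≤ x ⬝ᵥ A *ᵥ x := by
  simpa using hA.dotProduct_mulVec_nonneg x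

lemma mortar_contribution_nonpos {n : Type*} [Fintype n] {A : Matrix n n ℝ}
    (hA : A.PosSemidef) {α : ℝ} (hα : 0 ≤ α) (interior : Prop) [Decidable interior]
    {Δm Δp : ℝ} (jp jv vb : n → ℝ)
    (hInt : interior → Δm + Δp = -(α / 2) * (jp ⬝ᵥ A *ᵥ jp + jv ⬝ᵥ A *ᵥ jv))
    (hBnd : ¬ interior → Δm = -α * (vb ⬝ᵥ A *ᵥ vb)) :
    Δm + (if interior then Δp else 0) ≤ 0 := by
  split_ifs with hg
  · rw [hInt hg]
    exact mul_nonpos_of_nonpos_of_nonneg (by linarith)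
      (add_nonneg (hA.dotProduct_mulVec_nonneg_real jp) (hA.dotProduct_mulVec_nonneg_real jv))
  · rw [add_zero, hBnd hg]
    exact mul_nonpos_of_nonpos_of_nonneg (neg_nonpos.mpr hα)
      (hA.dotProduct_mulVec_nonneg_real vb)

/-- Semidiscrete energy stability: if each element energy satisfies
`dE^e/dt = Σ_{g ∈ G^e} Δ^{-g}` (with `Δ^{+g}` contributions on the plus side of interior
mortars), interior mortar contributions sum to
`-(α/2)(⟦p⟧ᵀ A ⟦p⟧ + ⟦v_n⟧ᵀ A ⟦v_n⟧)` with `A` positive semidefinite and `α ≥ 0`,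
and boundary mortars satisfy `Δ^{-g} = -α (v_n⁻)ᵀ A v_n⁻`, then the total energy is
nonincreasing: `E(t) ≤ E(0)` for `t ≥ 0`. -/
theorem total_energy_nonincreasing
    {E G : Type*} [Fintype E] [Fintype G] [DecidableEq E] {k : ℕ}
    (interior : G → Prop) [DecidablePred interior]
    (elmMinus elmPlus : G → E)
    (Δm Δp : G → ℝ → ℝ)
    (En : E → ℝ → ℝ)
    (α : ℝ) (hα : 0 ≤ α)
    (A : G → Matrix (Fin k) (Fin k) ℝ)
    (hA : ∀ g, (A g).PosSemidef)
    (jp jv vb : G → ℝ → (Fin k → ℝ))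
    (hEn : ∀ e t, HasDerivAt (En e)
      (∑ g : G, ((if elmMinus g = e then Δm g t else 0) +
        (if interior g ∧ elmPlus g = e then Δp g t else 0))) t)
    (hInt : ∀ g, interior g → ∀ t,
      Δm g t + Δp g t =
        -(α / 2) * (jp g t ⬝ᵥ (A g) *ᵥ (jp g t) + jv g t ⬝ᵥ (A g) *ᵥ (jv g t)))
    (hBnd : ∀ g, ¬ interior g → ∀ t, Δm g t = -α * (vb g t ⬝ᵥ (A g) *ᵥ (vb g t))) :
    ∀ t, 0 ≤ t → (∑ e, En e t) ≤ ∑ e, En e 0 := by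
  have hderiv : ∀ t, HasDerivAt (fun s => ∑ e, En e s)
      (∑ g, (Δm g t + if interior g then Δp g t else 0)) t := fun t => by
    rw [← sum_sum_mortar_contributions interior elmMinus elmPlus]
    exact HasDerivAt.fun_sum fun e _ => hEn e t
  have hderiv_nonpos : ∀ t, ∑ g, (Δm g t + if interior g then Δp g t else 0) ≤ 0 :=
    fun t => Finset.sum_nonpos fun g _ =>
      mortar_contribution_nonpos (hA g) hα (interior g) (jp g t) (jv g t) (vb g t)
        (fun hg => hInt g hg t) (fun hg => hBnd g hg t)
  exact fun t ht => antitone_of_hasDerivAt_nonpos hderiv hderiv_nonpos ht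
end

section
/- Let the numerical fluxes be p* = {p} - (α/2)⟦v_n⟧ and v_n* = {v_n} - (α/2)⟦p⟧ with average {u} = (u⁺+u⁻)/2 and jump ⟦u⟧ = u⁺ - u⁻. Then the mortar energy flux contributions Δ^{-g} = -(p⁻)ᵀ A v_n* + (p⁻)ᵀ A v_n⁻ - (v_n⁻)ᵀ A p* and Δ^{+g} = (p⁺)ᵀ A v_n* - (p⁺)ᵀ A v_n⁺ + (v_n⁺)ᵀ A p* (written with the normal of the minus side) sum to Δ^{-g} + Δ^{+g} = -(α/2)⟦p⟧ᵀ A ⟦p⟧ - (α/2)⟦v_n⟧ᵀ A ⟦v_n⟧. -/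
open Matrix

/-- The interior mortar energy contributions from the two sides sum to
`-(α/2)⟦p⟧ᵀ A ⟦p⟧ - (α/2)⟦v_n⟧ᵀ A ⟦v_n⟧` for the upwinded fluxes
`p* = {p} - (α/2)⟦v_n⟧`, `v_n* = {v_n} - (α/2)⟦p⟧`. -/
theorem mortar_energy_contributions_sum {k : ℕ} (pm pp vm vp : Fin k → ℝ)
    (A : Matrix (Fin k) (Fin k) ℝ) (hA : A.IsSymm) (α : ℝ) :
    let pstar : Fin k → ℝ := fun i => (pp i + pm i) / 2 - α / 2 * (vp i - vm i)
    let vstar : Fin k → ℝ := fun i => (vp i + vm i) / 2 - α / 2 * (pp i - pm i)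
    let Δm : ℝ := -(pm ⬝ᵥ A *ᵥ vstar) + pm ⬝ᵥ A *ᵥ vm - vm ⬝ᵥ A *ᵥ pstar
    let Δp : ℝ := pp ⬝ᵥ A *ᵥ vstar - pp ⬝ᵥ A *ᵥ vp + vp ⬝ᵥ A *ᵥ pstar
    Δm + Δp = -(α / 2) * ((pp - pm) ⬝ᵥ A *ᵥ (pp - pm))
              - (α / 2) * ((vp - vm) ⬝ᵥ A *ᵥ (vp - vm)) := by
  intro pstar vstar Δm Δp
  have hsym : ∀ x y : Fin k → ℝ, x ⬝ᵥ A *ᵥ y = y ⬝ᵥ A *ᵥ x := by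
    intro x y
    simp only [dotProduct, mulVec, dotProduct, Finset.mul_sum]
    rw [Finset.sum_comm]
    refine Finset.sum_congr rfl fun i _ => Finset.sum_congr rfl fun j _ => ?_
    have h := congrFun (congrFun hA.eq i) j
    simp only [transpose_apply] at h
    rw [h]; ring
  have hpstar : pstar = (1/2 : ℝ) • (pp + pm) - (α/2) • (vp - vm) := by
    funext i
    simp only [pstar, Pi.sub_apply, Pi.smul_apply, Pi.add_apply, smul_eq_mul]
    ring
  have hvstar : vstar = (1/2 : ℝ) • (vp + vm) - (α/2) • (pp - pm) := by
    funext i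
    simp only [vstar, Pi.sub_apply, Pi.smul_apply, Pi.add_apply, smul_eq_mul]
    ring
  show -(pm ⬝ᵥ A *ᵥ vstar) + pm ⬝ᵥ A *ᵥ vm - vm ⬝ᵥ A *ᵥ pstar
      + (pp ⬝ᵥ A *ᵥ vstar - pp ⬝ᵥ A *ᵥ vp + vp ⬝ᵥ A *ᵥ pstar)
      = -(α / 2) * ((pp - pm) ⬝ᵥ A *ᵥ (pp - pm))
        - (α / 2) * ((vp - vm) ⬝ᵥ A *ᵥ (vp - vm))
  rw [hsym vm pstar, hsym vp pstar, hpstar, hvstar]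
  simp only [mulVec_add, mulVec_sub, mulVec_smul, dotProduct_add, dotProduct_sub,
    dotProduct_smul, sub_dotProduct, add_dotProduct, smul_dotProduct, smul_eq_mul]
  ring
end

section
/- Suppose for each element the discrete divergence theorem holds: 𝟙ᵀ S_x v_x + 𝟙ᵀ S_y v_y = Σ_{g ∈ G^e} 𝟙ᵀ (L^g)ᵀ S_J^g W^g v_n⁻ for all v_x, v_y ∈ V_h, and the numerical flux v_n* takes equal and opposite values on the two sides of each interior mortar. Then the semidiscrete scheme M_J dp/dt + S_x v_x + S_y v_y = -Σ_g (L^g)ᵀ S_J^g W^g (v_n* - v_n⁻) conserves total pressure mass: Σ_e 𝟙ᵀ M_J dp/dt = 0 with periodic boundary conditions. -/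
/-!
Testing the scheme against the constant function turns each element's mass rate into minus
the total numerical flux through its mortars: the volume terms are removed by the discrete
divergence theorem, and the interpolation operators drop out because they reproduce constants.
Summed over the mesh, every mortar then appears exactly twice, once from each side, with
opposite fluxes, so everything cancels.
-/

open Matrix

theorem Matrix.dotProduct_transpose_mulVec_of_mulVec_one {R m n : Type*} [CommSemiring R]
    [Fintype m] [Fintype n]
    {L : Matrix m n R} (hL : L *ᵥ 1 = 1) (x : m → R) :
    1 ⬝ᵥ (Lᵀ *ᵥ x) = 1 ⬝ᵥ x := by
  rw [dotProduct_mulVec, vecMul_transpose, hL]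

theorem Matrix.one_dotProduct_mulVec_eq_neg_sum_flux {R n ι : Type*} [CommRing R] [Fintype n]
    {m : ι → Type*} [∀ i, Fintype (m i)] (s : Finset ι) (M Sx Sy : Matrix n n R)
    (p vx vy : n → R) (L : ∀ i, Matrix (m i) n R) (fminus fstar : ∀ i, m i → R)
    (hL : ∀ i, L i *ᵥ 1 = 1)
    (hdiv : 1 ⬝ᵥ (Sx *ᵥ vx) + 1 ⬝ᵥ (Sy *ᵥ vy) = ∑ i ∈ s, 1 ⬝ᵥ ((L i)ᵀ *ᵥ fminus i))
    (hscheme : M *ᵥ p + Sx *ᵥ vx + Sy *ᵥ vy = -∑ i ∈ s, (L i)ᵀ *ᵥ (fstar i - fminus i)) :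
    1 ⬝ᵥ (M *ᵥ p) = -∑ i ∈ s, 1 ⬝ᵥ fstar i := by
  have htested := congrArg (1 ⬝ᵥ ·) hscheme
  simp only [dotProduct_add, dotProduct_neg, dotProduct_sum,
    dotProduct_transpose_mulVec_of_mulVec_one (hL _), dotProduct_sub,
    Finset.sum_sub_distrib] at htested
  simp only [dotProduct_transpose_mulVec_of_mulVec_one (hL _)] at hdiv
  linear_combination htested - hdiv

theorem Finset.sum_sum_eq_zero_of_two_sides {E G M : Type*} [Fintype E] [AddCommGroup M]
    (Ge : E → Finset G) (em ep : G → E) (F : E → G → M)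
    (hmem : ∀ g, g ∈ Ge (em g) ∧ g ∈ Ge (ep g) ∧ em g ≠ ep g)
    (hsides : ∀ e g, g ∈ Ge e → e = em g ∨ e = ep g)
    (hopp : ∀ g, F (em g) g = -F (ep g) g) :
    ∑ e, ∑ g ∈ Ge e, F e g = 0 := by
  classical
  have hswap : ∑ e, ∑ g ∈ Ge e, F e g
      = ∑ g ∈ univ.biUnion Ge, ∑ e ∈ ({em g, ep g} : Finset E), F e g := by
    refine Finset.sum_comm' fun e g => ⟨?_, ?_⟩
    · rintro ⟨-, hg⟩
      refine ⟨?_, mem_biUnion.mpr ⟨e, mem_univ e, hg⟩⟩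
      rcases hsides e g hg with rfl | rfl <;> simp
    · rintro ⟨he, -⟩
      refine ⟨mem_univ e, ?_⟩
      rcases mem_insert.mp he with rfl | he
      · exact (hmem g).1
      · exact mem_singleton.mp he ▸ (hmem g).2.1
  rw [hswap]
  refine sum_eq_zero fun g _ => ?_
  rw [sum_pair (hmem g).2.2, hopp g, neg_add_cancel]

theorem pressure_mass_conservation_general
    {E G : Type*} [Fintype E]
    (d : E → ℕ) (q : G → ℕ)
    (Ge : E → Finset G)
    (em ep : G → E)
    (MJ Sx Sy : ∀ e : E, Matrix (Fin (d e)) (Fin (d e)) ℝ)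
    (dpdt vx vy : ∀ e : E, Fin (d e) → ℝ)
    (SJW : ∀ g : G, Matrix (Fin (q g)) (Fin (q g)) ℝ)
    (Lg : ∀ (e : E) (g : G), Matrix (Fin (q g)) (Fin (d e)) ℝ)
    (vminus vstar : ∀ (e : E) (g : G), Fin (q g) → ℝ)
    (hmem : ∀ g, g ∈ Ge (em g) ∧ g ∈ Ge (ep g) ∧ em g ≠ ep g)
    (hsides : ∀ e g, g ∈ Ge e → e = em g ∨ e = ep g)
    (hL1 : ∀ e g, Lg e g *ᵥ (fun _ => (1 : ℝ)) = fun _ => 1)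
    (hopp : ∀ g, SJW g *ᵥ vstar (em g) g = -(SJW g *ᵥ vstar (ep g) g))
    (hdiv : ∀ e, (fun _ => (1 : ℝ)) ⬝ᵥ (Sx e *ᵥ vx e) +
        (fun _ => (1 : ℝ)) ⬝ᵥ (Sy e *ᵥ vy e)
      = ∑ g ∈ Ge e, (fun _ => (1 : ℝ)) ⬝ᵥ ((Lg e g)ᵀ *ᵥ (SJW g *ᵥ vminus e g)))
    (hscheme : ∀ e, MJ e *ᵥ dpdt e + Sx e *ᵥ vx e + Sy e *ᵥ vy e
      = -∑ g ∈ Ge e, (Lg e g)ᵀ *ᵥ (SJW g *ᵥ (vstar e g - vminus e g))) :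
    ∑ e, (fun _ => (1 : ℝ)) ⬝ᵥ (MJ e *ᵥ dpdt e) = 0 := by
  have hlocal : ∀ e, (fun _ => (1 : ℝ)) ⬝ᵥ (MJ e *ᵥ dpdt e)
      = -∑ g ∈ Ge e, (fun _ => (1 : ℝ)) ⬝ᵥ (SJW g *ᵥ vstar e g) := fun e =>
    one_dotProduct_mulVec_eq_neg_sum_flux (Ge e) (MJ e) (Sx e) (Sy e) (dpdt e) (vx e) (vy e)
      (Lg e) (fun g => SJW g *ᵥ vminus e g) (fun g => SJW g *ᵥ vstar e g) (hL1 e) (hdiv e)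
      (by simpa only [mulVec_sub] using hscheme e)
  simp only [hlocal, Finset.sum_neg_distrib, neg_eq_zero]
  exact Finset.sum_sum_eq_zero_of_two_sides Ge em ep _ hmem hsides fun g => by
    rw [hopp g, dotProduct_neg]

/-- Conservation of pressure mass: if every element satisfies the discrete divergence theorem
`𝟙ᵀ S_x v_x + 𝟙ᵀ S_y v_y = Σ_{g∈G^e} 𝟙ᵀ (L^g)ᵀ S_J^g W^g v_n⁻`, the mortar interpolation
maps constants to constants, and the numerical flux `v_n*` takes equal and opposite values on
the two sides of every (interior) mortar, then the semidiscrete pressure update satisfies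
`Σ_e 𝟙ᵀ M_J dp/dt = 0` (periodic boundary conditions: every mortar is interior). -/
theorem pressure_mass_conservation
    {E G : Type*} [Fintype E] [DecidableEq G]
    (d : E → ℕ) (q : G → ℕ)
    (Ge : E → Finset G)
    (em ep : G → E)
    (MJ Sx Sy : ∀ e : E, Matrix (Fin (d e)) (Fin (d e)) ℝ)
    (dpdt vx vy : ∀ e : E, Fin (d e) → ℝ)
    (SJW : ∀ g : G, Matrix (Fin (q g)) (Fin (q g)) ℝ)
    (Lg : ∀ (e : E) (g : G), Matrix (Fin (q g)) (Fin (d e)) ℝ)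
    (vminus vstar : ∀ (e : E) (g : G), Fin (q g) → ℝ)
    (hmem : ∀ g, g ∈ Ge (em g) ∧ g ∈ Ge (ep g) ∧ em g ≠ ep g)
    (hsides : ∀ e g, g ∈ Ge e → e = em g ∨ e = ep g)
    (hL1 : ∀ e g, Lg e g *ᵥ (fun _ => (1 : ℝ)) = fun _ => 1)
    (hopp : ∀ g, SJW g *ᵥ vstar (em g) g = -(SJW g *ᵥ vstar (ep g) g))
    (hdiv : ∀ e, (fun _ => (1 : ℝ)) ⬝ᵥ (Sx e *ᵥ vx e) +
        (fun _ => (1 : ℝ)) ⬝ᵥ (Sy e *ᵥ vy e)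
      = ∑ g ∈ Ge e, (fun _ => (1 : ℝ)) ⬝ᵥ ((Lg e g)ᵀ *ᵥ (SJW g *ᵥ vminus e g)))
    (hscheme : ∀ e, MJ e *ᵥ dpdt e + Sx e *ᵥ vx e + Sy e *ᵥ vy e
      = -∑ g ∈ Ge e, (Lg e g)ᵀ *ᵥ (SJW g *ᵥ (vstar e g - vminus e g))) :
    ∑ e, (fun _ => (1 : ℝ)) ⬝ᵥ (MJ e *ᵥ dpdt e) = 0 :=
  pressure_mass_conservation_general d q Ge em ep MJ Sx Sy dpdt vx vy SJW Lg vminus vstar hmem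
    hsides hL1 hopp hdiv hscheme
end

section
/- Suppose for each element S_x 𝟙 = S_y 𝟙 = 0 and the numerical flux p* multiplied by the signed normal component takes equal and opposite values on the two sides of each interior mortar. Then the velocity updates M_J dv_x/dt - S_xᵀ p = -Σ_g (L^g)ᵀ n_x^{-g} S_J^g W^g p* and the analogous y-equation conserve total velocity mass: Σ_e 𝟙ᵀ M_J dv_x/dt = 0 and Σ_e 𝟙ᵀ M_J dv_y/dt = 0 with periodic boundary conditions, without any assumption on the metric-term divergence theorem. -/
/-!
Dotting the scheme with `𝟙` kills the volume term, since `𝟙ᵀ Sᵀ p = (S 𝟙)ᵀ p = 0`, and turns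
each lifted mortar term into the plain mortar flux `Σᵢ nᵢ (S_J W p*)ᵢ`, since `L 𝟙 = 𝟙`. Summed
over the mesh, every mortar then contributes exactly twice, once from each of its two sides,
with fluxes of opposite sign.
-/

open Matrix Finset

theorem sum_sum_eq_zero_of_two_sided {E G M : Type*} [Fintype E] [AddCommGroup M]
    (Ge : E → Finset G) (em ep : G → E)
    (hmem : ∀ g, g ∈ Ge (em g) ∧ g ∈ Ge (ep g) ∧ em g ≠ ep g)
    (hsides : ∀ e g, g ∈ Ge e → e = em g ∨ e = ep g)
    (F : E → G → M) (hF : ∀ g, F (em g) g = -F (ep g) g) :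
    ∑ e, ∑ g ∈ Ge e, F e g = 0 := by
  classical
  have hincidence : ∀ e g, e ∈ univ ∧ g ∈ Ge e ↔ e ∈ ({em g, ep g} : Finset E) ∧
      g ∈ univ.biUnion Ge := by
    intro e g
    simp only [mem_univ, true_and, mem_insert, mem_singleton, mem_biUnion]
    constructor
    · exact fun hg => ⟨hsides e g hg, e, hg⟩
    · rintro ⟨rfl | rfl, -⟩
      exacts [(hmem g).1, (hmem g).2.1]
  rw [sum_comm' hincidence]
  refine sum_eq_zero fun g _ => ?_
  rw [sum_pair (hmem g).2.2, hF, neg_add_cancel]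

theorem one_dotProduct_mulVec_eq_neg_sum_of_scheme {R ι G : Type*} {κ : G → Type*}
    [CommRing R] [Fintype ι] [∀ g, Fintype (κ g)]
    (M S : Matrix ι ι R) (p dv : ι → R) (s : Finset G)
    (L : ∀ g, Matrix (κ g) ι R) (f : ∀ g, κ g → R)
    (hL1 : ∀ g, L g *ᵥ 1 = 1) (hS1 : S *ᵥ 1 = 0)
    (hscheme : M *ᵥ dv - Sᵀ *ᵥ p = -∑ g ∈ s, (L g)ᵀ *ᵥ f g) :
    1 ⬝ᵥ (M *ᵥ dv) = -∑ g ∈ s, ∑ i, f g i := by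
  have hvolume : 1 ⬝ᵥ (Sᵀ *ᵥ p) = 0 := by
    rw [dotProduct_transpose_mulVec, hS1, dotProduct_zero]
  have hsurface : ∀ g, 1 ⬝ᵥ ((L g)ᵀ *ᵥ f g) = ∑ i, f g i := fun g => by
    rw [dotProduct_transpose_mulVec, hL1, dotProduct_one]
  rw [eq_add_of_sub_eq hscheme, dotProduct_add, hvolume, add_zero, dotProduct_neg,
    dotProduct_sum]
  simp only [hsurface]

theorem sum_one_dotProduct_mulVec_eq_zero {R E G : Type*} [CommRing R] [Fintype E]
    {ι : E → Type*} [∀ e, Fintype (ι e)] {κ : G → Type*} [∀ g, Fintype (κ g)]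
    (Ge : E → Finset G) (em ep : G → E)
    (hmem : ∀ g, g ∈ Ge (em g) ∧ g ∈ Ge (ep g) ∧ em g ≠ ep g)
    (hsides : ∀ e g, g ∈ Ge e → e = em g ∨ e = ep g)
    (M S : ∀ e, Matrix (ι e) (ι e) R) (p dv : ∀ e, ι e → R)
    (L : ∀ e g, Matrix (κ g) (ι e) R) (n : E → ∀ g, κ g → R) (w : ∀ g, κ g → R)
    (hL1 : ∀ e g, L e g *ᵥ 1 = 1) (hS1 : ∀ e, S e *ᵥ 1 = 0)
    (hopp : ∀ g, n (em g) g = -n (ep g) g)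
    (hscheme : ∀ e, M e *ᵥ dv e - (S e)ᵀ *ᵥ p e
      = -∑ g ∈ Ge e, (L e g)ᵀ *ᵥ (fun i => n e g i * w g i)) :
    ∑ e, 1 ⬝ᵥ (M e *ᵥ dv e) = 0 := by
  have helement : ∀ e, 1 ⬝ᵥ (M e *ᵥ dv e) = -∑ g ∈ Ge e, ∑ i, n e g i * w g i := fun e =>
    one_dotProduct_mulVec_eq_neg_sum_of_scheme _ _ _ _ _ _ _ (hL1 e) (hS1 e) (hscheme e)
  rw [sum_congr rfl fun e _ => helement e, sum_neg_distrib, neg_eq_zero]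
  refine sum_sum_eq_zero_of_two_sided Ge em ep hmem hsides _ fun g => ?_
  simp only [hopp g, Pi.neg_apply, neg_mul, sum_neg_distrib]

theorem velocity_mass_conservation_general
    {E G : Type*} [Fintype E]
    (d : E → ℕ) (q : G → ℕ)
    (Ge : E → Finset G)
    (em ep : G → E)
    (MJ Sx Sy : ∀ e : E, Matrix (Fin (d e)) (Fin (d e)) ℝ)
    (p dvxdt dvydt : ∀ e : E, Fin (d e) → ℝ)
    (SJW : ∀ g : G, Matrix (Fin (q g)) (Fin (q g)) ℝ)
    (Lg : ∀ (e : E) (g : G), Matrix (Fin (q g)) (Fin (d e)) ℝ)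
    (nx ny : ∀ (e : E) (g : G), Fin (q g) → ℝ)
    (pstar : ∀ g : G, Fin (q g) → ℝ)
    (hmem : ∀ g, g ∈ Ge (em g) ∧ g ∈ Ge (ep g) ∧ em g ≠ ep g)
    (hsides : ∀ e g, g ∈ Ge e → e = em g ∨ e = ep g)
    (hL1 : ∀ e g, Lg e g *ᵥ (fun _ => (1 : ℝ)) = fun _ => 1)
    (hSx1 : ∀ e, Sx e *ᵥ (fun _ => (1 : ℝ)) = 0)
    (hSy1 : ∀ e, Sy e *ᵥ (fun _ => (1 : ℝ)) = 0)
    (hoppx : ∀ g, nx (em g) g = -(nx (ep g) g))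
    (hoppy : ∀ g, ny (em g) g = -(ny (ep g) g))
    (hschemex : ∀ e, MJ e *ᵥ dvxdt e - (Sx e)ᵀ *ᵥ p e
      = -∑ g ∈ Ge e, (Lg e g)ᵀ *ᵥ (fun i => nx e g i * (SJW g *ᵥ pstar g) i))
    (hschemey : ∀ e, MJ e *ᵥ dvydt e - (Sy e)ᵀ *ᵥ p e
      = -∑ g ∈ Ge e, (Lg e g)ᵀ *ᵥ (fun i => ny e g i * (SJW g *ᵥ pstar g) i)) :
    (∑ e, (fun _ => (1 : ℝ)) ⬝ᵥ (MJ e *ᵥ dvxdt e) = 0) ∧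
    (∑ e, (fun _ => (1 : ℝ)) ⬝ᵥ (MJ e *ᵥ dvydt e) = 0) :=
  ⟨sum_one_dotProduct_mulVec_eq_zero Ge em ep hmem hsides MJ Sx p dvxdt Lg nx
      (fun g => SJW g *ᵥ pstar g) hL1 hSx1 hoppx hschemex,
    sum_one_dotProduct_mulVec_eq_zero Ge em ep hmem hsides MJ Sy p dvydt Lg ny
      (fun g => SJW g *ᵥ pstar g) hL1 hSy1 hoppy hschemey⟩

/-- Conservation of the velocity components: if each element's stiffness matrices annihilate
constants (`S_x 𝟙 = S_y 𝟙 = 0`), the mortar interpolation maps constants to constants, the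
normal components are equal and opposite on the two sides of each (interior) mortar, and the
numerical flux `p*` is single valued on each mortar, then the semidiscrete velocity updates
satisfy `Σ_e 𝟙ᵀ M_J dv_x/dt = 0` and `Σ_e 𝟙ᵀ M_J dv_y/dt = 0` with periodic boundary
conditions, without any assumption on the metric-term divergence theorem. -/
theorem velocity_mass_conservation
    {E G : Type*} [Fintype E] [DecidableEq G]
    (d : E → ℕ) (q : G → ℕ)
    (Ge : E → Finset G)
    (em ep : G → E)
    (MJ Sx Sy : ∀ e : E, Matrix (Fin (d e)) (Fin (d e)) ℝ)
    (p dvxdt dvydt : ∀ e : E, Fin (d e) → ℝ)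
    (SJW : ∀ g : G, Matrix (Fin (q g)) (Fin (q g)) ℝ)
    (Lg : ∀ (e : E) (g : G), Matrix (Fin (q g)) (Fin (d e)) ℝ)
    (nx ny : ∀ (e : E) (g : G), Fin (q g) → ℝ)
    (pstar : ∀ g : G, Fin (q g) → ℝ)
    (hmem : ∀ g, g ∈ Ge (em g) ∧ g ∈ Ge (ep g) ∧ em g ≠ ep g)
    (hsides : ∀ e g, g ∈ Ge e → e = em g ∨ e = ep g)
    (hL1 : ∀ e g, Lg e g *ᵥ (fun _ => (1 : ℝ)) = fun _ => 1)
    (hSx1 : ∀ e, Sx e *ᵥ (fun _ => (1 : ℝ)) = 0)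
    (hSy1 : ∀ e, Sy e *ᵥ (fun _ => (1 : ℝ)) = 0)
    (hoppx : ∀ g, nx (em g) g = -(nx (ep g) g))
    (hoppy : ∀ g, ny (em g) g = -(ny (ep g) g))
    (hschemex : ∀ e, MJ e *ᵥ dvxdt e - (Sx e)ᵀ *ᵥ p e
      = -∑ g ∈ Ge e, (Lg e g)ᵀ *ᵥ (fun i => nx e g i * (SJW g *ᵥ pstar g) i))
    (hschemey : ∀ e, MJ e *ᵥ dvydt e - (Sy e)ᵀ *ᵥ p e
      = -∑ g ∈ Ge e, (Lg e g)ᵀ *ᵥ (fun i => ny e g i * (SJW g *ᵥ pstar g) i)) :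
    (∑ e, (fun _ => (1 : ℝ)) ⬝ᵥ (MJ e *ᵥ dvxdt e) = 0) ∧
    (∑ e, (fun _ => (1 : ℝ)) ⬝ᵥ (MJ e *ᵥ dvydt e) = 0) :=
  velocity_mass_conservation_general d q Ge em ep MJ Sx Sy p dvxdt dvydt SJW Lg nx ny pstar hmem
    hsides hL1 hSx1 hSy1 hoppx hoppy hschemex hschemey
end

section
/- Suppose the solution is constant: p = β𝟙, v_x = γ_x 𝟙, v_y = γ_y 𝟙 on every element, with β, γ_x, γ_y ∈ ℝ. If S_x 𝟙 = S_y 𝟙 = 0, the fluxes satisfy v_n* = v_n⁻ and p* = β on every mortar (since jumps vanish), and each element satisfies the discrete divergence theorem wᵀ S_xᵀ 𝟙 = Σ_g (n_x^{-g} w⁻)ᵀ S_J^g W^g 𝟙^g for all w ∈ V_h (and analogously for y), then the semidiscrete scheme gives dp/dt = 0, dv_x/dt = 0, dv_y/dt = 0, i.e., constants are preserved. -/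
/-!
For a constant state every penalty term vanishes: `v_n* - v_n⁻ = 0`, and `S 𝟙 = 0` kills the
volume terms of the pressure equation. In the velocity equations, the discrete divergence
theorem holds for every test vector `w`, so it identifies `Sᵀ (β𝟙)` with the lifted boundary
flux of the constant pressure `p* = β`, and the two cancel. Invertibility of `M_J` finishes.
-/

open Matrix

section

variable {R : Type*} [CommSemiring R] {m n : Type*} [Fintype n]

lemma mulVec_const (A : Matrix m n R) (a : R) :
    A *ᵥ (fun _ => a) = a • (A *ᵥ fun _ => 1) := by
  rw [← mulVec_smul]
  congr 1
  funext
  simp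

lemma weighted_mulVec_dotProduct [Fintype m] (L : Matrix m n R) (c u : m → R) (w : n → R) :
    (fun i => c i * (L *ᵥ w) i) ⬝ᵥ u = w ⬝ᵥ (Lᵀ *ᵥ fun i => c i * u i) :=
  calc (fun i => c i * (L *ᵥ w) i) ⬝ᵥ u = (fun i => c i * u i) ⬝ᵥ (L *ᵥ w) := by
        simp only [dotProduct]
        exact Finset.sum_congr rfl fun i _ => by ring
    _ = w ⬝ᵥ (Lᵀ *ᵥ fun i => c i * u i) := by
        rw [dotProduct_mulVec, ← mulVec_transpose, dotProduct_comm]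

lemma eq_sum_transpose_mulVec_of_forall_dotProduct {ι : Type*} {k : ι → Type*}
    [∀ g, Fintype (k g)] (s : Finset ι) (a : n → R) (L : ∀ g, Matrix (k g) n R)
    (c u : ∀ g, k g → R)
    (h : ∀ w, w ⬝ᵥ a = ∑ g ∈ s, (fun i => c g i * (L g *ᵥ w) i) ⬝ᵥ u g) :
    a = ∑ g ∈ s, (L g)ᵀ *ᵥ fun i => c g i * u g i := by
  refine dotProduct_eq _ _ fun w => ?_
  rw [dotProduct_comm, h, dotProduct_comm, dotProduct_sum]
  simp only [weighted_mulVec_dotProduct]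

lemma mulVec_const_eq_sum_of_forall_dotProduct {o ι : Type*} [Fintype o] {k l : ι → Type*}
    [∀ g, Fintype (k g)] [∀ g, Fintype (l g)] (s : Finset ι) (B : Matrix n o R)
    (A : ∀ g, Matrix (k g) (l g) R) (L : ∀ g, Matrix (k g) n R) (c : ∀ g, k g → R)
    (h : ∀ w, w ⬝ᵥ (B *ᵥ fun _ => 1)
      = ∑ g ∈ s, (fun i => c g i * (L g *ᵥ w) i) ⬝ᵥ (A g *ᵥ fun _ => 1))
    (a : R) :
    B *ᵥ (fun _ => a) = ∑ g ∈ s, (L g)ᵀ *ᵥ fun i => c g i * (A g *ᵥ fun _ => a) i := by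
  refine eq_sum_transpose_mulVec_of_forall_dotProduct s _ L c _ fun w => ?_
  simp only [mulVec_const _ a, dotProduct_smul, h, Finset.smul_sum]

end

theorem constant_preservation_general
    {G : Type*} {d : ℕ} (q : G → ℕ)
    (Ge : Finset G)
    (MJ Sx Sy : Matrix (Fin d) (Fin d) ℝ) (hMJ : MJ.PosDef)
    (SJW : ∀ g : G, Matrix (Fin (q g)) (Fin (q g)) ℝ)
    (Lg : ∀ g : G, Matrix (Fin (q g)) (Fin d) ℝ)
    (nx ny : ∀ g : G, Fin (q g) → ℝ)
    (β γx γy : ℝ)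
    (p vx vy dpdt dvxdt dvydt : Fin d → ℝ)
    (hp : p = fun _ => β) (hvx : vx = fun _ => γx) (hvy : vy = fun _ => γy)
    (vnminus vstar pstar : ∀ g : G, Fin (q g) → ℝ)
    (hvstar : ∀ g, vstar g = vnminus g)
    (hpstar : ∀ g, pstar g = fun _ => β)
    (hSx1 : Sx *ᵥ (fun _ => (1 : ℝ)) = 0)
    (hSy1 : Sy *ᵥ (fun _ => (1 : ℝ)) = 0)
    (hdivx : ∀ w : Fin d → ℝ, w ⬝ᵥ (Sxᵀ *ᵥ (fun _ => (1 : ℝ)))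
      = ∑ g ∈ Ge, (fun i => nx g i * (Lg g *ᵥ w) i) ⬝ᵥ (SJW g *ᵥ (fun _ => (1 : ℝ))))
    (hdivy : ∀ w : Fin d → ℝ, w ⬝ᵥ (Syᵀ *ᵥ (fun _ => (1 : ℝ)))
      = ∑ g ∈ Ge, (fun i => ny g i * (Lg g *ᵥ w) i) ⬝ᵥ (SJW g *ᵥ (fun _ => (1 : ℝ))))
    (hschemep : MJ *ᵥ dpdt + Sx *ᵥ vx + Sy *ᵥ vy
      = -∑ g ∈ Ge, (Lg g)ᵀ *ᵥ (SJW g *ᵥ (vstar g - vnminus g)))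
    (hschemex : MJ *ᵥ dvxdt - Sxᵀ *ᵥ p
      = -∑ g ∈ Ge, (Lg g)ᵀ *ᵥ (fun i => nx g i * (SJW g *ᵥ pstar g) i))
    (hschemey : MJ *ᵥ dvydt - Syᵀ *ᵥ p
      = -∑ g ∈ Ge, (Lg g)ᵀ *ᵥ (fun i => ny g i * (SJW g *ᵥ pstar g) i)) :
    dpdt = 0 ∧ dvxdt = 0 ∧ dvydt = 0 := by
  have cancel_mass {x : Fin d → ℝ} (h : MJ *ᵥ x = 0) : x = 0 :=
    mulVec_injective_of_isUnit hMJ.isUnit (h.trans (mulVec_zero MJ).symm)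
  refine ⟨cancel_mass ?_, cancel_mass ?_, cancel_mass ?_⟩
  · have hSvx : Sx *ᵥ vx = 0 := by rw [hvx, mulVec_const, hSx1, smul_zero]
    have hSvy : Sy *ᵥ vy = 0 := by rw [hvy, mulVec_const, hSy1, smul_zero]
    simpa [hSvx, hSvy, hvstar] using hschemep
  · have hflux : Sxᵀ *ᵥ p
        = ∑ g ∈ Ge, (Lg g)ᵀ *ᵥ (fun i => nx g i * (SJW g *ᵥ pstar g) i) := by
      simp only [hp, hpstar]
      exact mulVec_const_eq_sum_of_forall_dotProduct Ge Sxᵀ SJW Lg nx hdivx β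
    rw [hflux, sub_eq_neg_self] at hschemex
    exact hschemex
  · have hflux : Syᵀ *ᵥ p
        = ∑ g ∈ Ge, (Lg g)ᵀ *ᵥ (fun i => ny g i * (SJW g *ᵥ pstar g) i) := by
      simp only [hp, hpstar]
      exact mulVec_const_eq_sum_of_forall_dotProduct Ge Syᵀ SJW Lg ny hdivy β
    rw [hflux, sub_eq_neg_self] at hschemey
    exact hschemey

/-- Constant preservation: for a globally constant state `p = β𝟙`, `v_x = γ_x 𝟙`,
`v_y = γ_y 𝟙`, if `S_x 𝟙 = S_y 𝟙 = 0`, the fluxes satisfy `v_n* = v_n⁻` and `p* = β𝟙` on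
every mortar, and the element satisfies the discrete divergence theorem
`wᵀ S_xᵀ 𝟙 = Σ_g (n_x w⁻)ᵀ S_J W 𝟙` (and analogously for `y`) for all `w`, then the
semidiscrete scheme with invertible (SPD) mass matrix gives
`dp/dt = 0`, `dv_x/dt = 0`, `dv_y/dt = 0`. -/
theorem constant_preservation
    {G : Type*} [DecidableEq G] {d : ℕ} (q : G → ℕ)
    (Ge : Finset G)
    (MJ Sx Sy : Matrix (Fin d) (Fin d) ℝ) (hMJ : MJ.PosDef)
    (SJW : ∀ g : G, Matrix (Fin (q g)) (Fin (q g)) ℝ)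
    (Lg : ∀ g : G, Matrix (Fin (q g)) (Fin d) ℝ)
    (nx ny : ∀ g : G, Fin (q g) → ℝ)
    (β γx γy : ℝ)
    (p vx vy dpdt dvxdt dvydt : Fin d → ℝ)
    (hp : p = fun _ => β) (hvx : vx = fun _ => γx) (hvy : vy = fun _ => γy)
    (vnminus vstar pstar : ∀ g : G, Fin (q g) → ℝ)
    (hvn : ∀ g, vnminus g = fun i => nx g i * (Lg g *ᵥ vx) i + ny g i * (Lg g *ᵥ vy) i)
    (hvstar : ∀ g, vstar g = vnminus g)
    (hpstar : ∀ g, pstar g = fun _ => β)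
    (hSx1 : Sx *ᵥ (fun _ => (1 : ℝ)) = 0)
    (hSy1 : Sy *ᵥ (fun _ => (1 : ℝ)) = 0)
    (hdivx : ∀ w : Fin d → ℝ, w ⬝ᵥ (Sxᵀ *ᵥ (fun _ => (1 : ℝ)))
      = ∑ g ∈ Ge, (fun i => nx g i * (Lg g *ᵥ w) i) ⬝ᵥ (SJW g *ᵥ (fun _ => (1 : ℝ))))
    (hdivy : ∀ w : Fin d → ℝ, w ⬝ᵥ (Syᵀ *ᵥ (fun _ => (1 : ℝ)))
      = ∑ g ∈ Ge, (fun i => ny g i * (Lg g *ᵥ w) i) ⬝ᵥ (SJW g *ᵥ (fun _ => (1 : ℝ))))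
    (hschemep : MJ *ᵥ dpdt + Sx *ᵥ vx + Sy *ᵥ vy
      = -∑ g ∈ Ge, (Lg g)ᵀ *ᵥ (SJW g *ᵥ (vstar g - vnminus g)))
    (hschemex : MJ *ᵥ dvxdt - Sxᵀ *ᵥ p
      = -∑ g ∈ Ge, (Lg g)ᵀ *ᵥ (fun i => nx g i * (SJW g *ᵥ pstar g) i))
    (hschemey : MJ *ᵥ dvydt - Syᵀ *ᵥ p
      = -∑ g ∈ Ge, (Lg g)ᵀ *ᵥ (fun i => ny g i * (SJW g *ᵥ pstar g) i)) :
    dpdt = 0 ∧ dvxdt = 0 ∧ dvydt = 0 :=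
  constant_preservation_general q Ge MJ Sx Sy hMJ SJW Lg nx ny β γx γy p vx vy dpdt dvxdt dvydt hp
    hvx hvy vnminus vstar pstar hvstar hpstar hSx1 hSy1 hdivx hdivy hschemep hschemex hschemey
end
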